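/- arXiv:2412.20477 — 6 statements merged into one kernel-verified Lean document; each statement's English description precedes it below -/
import Mathlib

section
/- Let n ≥ 1, and let t_c > 0, 0 < κ < 1, 0 < α ≤ 1, ζ ≥ 0 be real parameters. Suppose ε : [0, ∞) → ℝⁿ is continuous, with ε(0) = ε₀, and at every time t > 0 with ε(t) ≠ 0 the function ε is differentiable and satisfies the noise-free PTC-NT-FOZNN error dynamics ε̇(t) = −(π t^{α−1}/(2 κ t_c^{α})) (‖ε(t)‖^{1−κ} + ‖ε(t)‖^{1+κ}) ε(t)/‖ε(t)‖ − ζ ε(t)/‖ε(t)‖. Then there exists a time T with 0 ≤ T ≤ t_c such that ε(T) = 0; i.e., the residual error reaches zero within the predefined time t_c. -/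
open Real

/-- Predefined-time convergence of the noise-free PTC-NT-FOZNN error dynamics.
If `ε : [0, ∞) → ℝⁿ` is continuous with `ε 0 = ε₀` and satisfies the dynamics
`ε̇(t) = −(π t^{α−1}/(2 κ t_c^{α})) (‖ε(t)‖^{1−κ} + ‖ε(t)‖^{1+κ}) ε(t)/‖ε(t)‖ − ζ ε(t)/‖ε(t)‖`
at every `t > 0` with `ε t ≠ 0`, then `ε` reaches `0` at some time `T ∈ [0, t_c]`. -/
theorem ptc_nt_foznn_noise_free_predefined_time_convergence
    (n : ℕ) (hn : 1 ≤ n) (t_c κ α ζ : ℝ)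
    (htc : 0 < t_c) (hκ0 : 0 < κ) (hκ1 : κ < 1) (hα0 : 0 < α) (hα1 : α ≤ 1) (hζ : 0 ≤ ζ)
    (ε : ℝ → EuclideanSpace ℝ (Fin n)) (ε₀ : EuclideanSpace ℝ (Fin n))
    (hcont : ContinuousOn ε (Set.Ici (0 : ℝ)))
    (hinit : ε 0 = ε₀)
    (hdyn : ∀ t : ℝ, 0 < t → ε t ≠ 0 →
      HasDerivAt ε
        (-(π * t ^ (α - 1) / (2 * κ * t_c ^ α) *
            (‖ε t‖ ^ (1 - κ) + ‖ε t‖ ^ (1 + κ))) • (‖ε t‖⁻¹ • ε t)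
          - ζ • (‖ε t‖⁻¹ • ε t)) t) :
    ∃ T : ℝ, 0 ≤ T ∧ T ≤ t_c ∧ ε T = 0 := by
  by_contra hcon
  push_neg at hcon
  have hnz : ∀ t ∈ Set.Icc (0 : ℝ) t_c, ε t ≠ 0 := fun t ht => hcon t ht.1 ht.2
  set g : ℝ → ℝ := fun s => Real.arctan (‖ε s‖ ^ κ) with hg
  set φ : ℝ → ℝ := fun s => π / (2 * α * t_c ^ α) * s ^ α with hφ
  set h : ℝ → ℝ := fun s => g s + φ s with hh
  -- key derivative computation
  have hder : ∀ t ∈ Set.Ioo (0 : ℝ) t_c, ∃ d, HasDerivAt h d t ∧ d ≤ 0 := by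
    intro t ht
    have ht0 : 0 < t := ht.1
    have hne : ε t ≠ 0 := hnz t ⟨le_of_lt ht0, le_of_lt ht.2⟩
    set y : ℝ := ‖ε t‖ with hy
    have hy0 : 0 < y := norm_pos_iff.mpr hne
    set A : ℝ := π * t ^ (α - 1) / (2 * κ * t_c ^ α) * (y ^ (1 - κ) + y ^ (1 + κ)) with hA
    set c : ℝ := -A - ζ with hc
    have hdε := hdyn t ht0 hne
    have hdε' : HasDerivAt ε (c • (y⁻¹ • ε t)) t := by
      have : (-A) • (y⁻¹ • ε t) - ζ • (y⁻¹ • ε t) = c • (y⁻¹ • ε t) := by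
        rw [hc, sub_smul]
      rw [← this]
      simpa [hA, hy] using hdε
    -- derivative of inner product
    have hinner : HasDerivAt (fun s => (inner ℝ (ε s) (ε s) : ℝ)) (2 * (c * y)) t := by
      have := hdε'.inner ℝ hdε'
      refine this.congr_deriv ?_
      simp only [real_inner_smul_left, real_inner_smul_right,
        real_inner_self_eq_norm_mul_norm, ← hy]
      field_simp
      ring
    -- derivative of the norm
    have hwval : (inner ℝ (ε t) (ε t) : ℝ) = y * y := by
      rw [real_inner_self_eq_norm_mul_norm]
    have hN : HasDerivAt (fun s => ‖ε s‖) c t := by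
      have hw0 : (inner ℝ (ε t) (ε t) : ℝ) ≠ 0 := by
        rw [hwval]; positivity
      have hsq := (Real.hasDerivAt_sqrt hw0).comp t hinner
      have hfun : (fun s => Real.sqrt (inner ℝ (ε s) (ε s) : ℝ)) = fun s => ‖ε s‖ := by
        funext s
        rw [real_inner_self_eq_norm_mul_norm, Real.sqrt_mul_self (norm_nonneg _)]
      have hval : 1 / (2 * Real.sqrt (inner ℝ (ε t) (ε t) : ℝ)) * (2 * (c * y)) = c := by
        rw [hwval, Real.sqrt_mul_self hy0.le]
        field_simp
      rw [← hfun, ← hval]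
      exact hsq
    -- derivative of ‖ε s‖ ^ κ
    have hrpow : HasDerivAt (fun s => ‖ε s‖ ^ κ) (κ * y ^ (κ - 1) * c) t := by
      have := (Real.hasDerivAt_rpow_const (p := κ) (Or.inl hy0.ne')).comp t hN
      exact this.congr_deriv (by ring)
    -- derivative of g
    have hgder : HasDerivAt g (1 / (1 + (y ^ κ) ^ 2) * (κ * y ^ (κ - 1) * c)) t :=
      by have := (Real.hasDerivAt_arctan (y ^ κ)).comp t hrpow; exact this
    -- derivative of φ
    have hφder : HasDerivAt φ (π / (2 * α * t_c ^ α) * (α * t ^ (α - 1))) t :=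
      (Real.hasDerivAt_rpow_const (p := α) (Or.inl ht0.ne')).const_mul _
    refine ⟨_, hgder.add hφder, ?_⟩
    -- the algebra: the total derivative is nonpositive
    have htcα : (0 : ℝ) < t_c ^ α := Real.rpow_pos_of_pos htc _
    have hBsimp : π / (2 * α * t_c ^ α) * (α * t ^ (α - 1)) = π * t ^ (α - 1) / (2 * t_c ^ α) := by
      field_simp
    set B : ℝ := π * t ^ (α - 1) / (2 * t_c ^ α) with hB
    have hP0 : (0 : ℝ) < 1 + (y ^ κ) ^ 2 := by positivity
    have hyk1 : y ^ (κ - 1) * y ^ (1 - κ) = 1 := by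
      rw [← Real.rpow_add hy0]; norm_num
    have hyk2 : y ^ (κ - 1) * y ^ (1 + κ) = (y ^ κ) ^ 2 := by
      rw [← Real.rpow_add hy0, sq, ← Real.rpow_add hy0]
      ring_nf
    have hκne : κ ≠ 0 := hκ0.ne'
    have hAcomp : κ * y ^ (κ - 1) * A = B * (1 + (y ^ κ) ^ 2) := by
      have e1 : κ * y ^ (κ - 1) * A
          = B * (y ^ (κ - 1) * y ^ (1 - κ) + y ^ (κ - 1) * y ^ (1 + κ)) := by
        rw [hA, hB]
        field_simp
      rw [e1, hyk1, hyk2]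
    have hkeyc : κ * y ^ (κ - 1) * c = -(B * (1 + (y ^ κ) ^ 2)) - ζ * (κ * y ^ (κ - 1)) := by
      rw [hc]
      linear_combination -hAcomp
    rw [hBsimp, hkeyc]
    have hyκ1 : (0 : ℝ) ≤ κ * y ^ (κ - 1) := by positivity
    have : 1 / (1 + (y ^ κ) ^ 2) * (-(B * (1 + (y ^ κ) ^ 2)) - ζ * (κ * y ^ (κ - 1))) + B
        = -(ζ * (κ * y ^ (κ - 1)) / (1 + (y ^ κ) ^ 2)) := by
      field_simp
      ring
    rw [this]
    have : 0 ≤ ζ * (κ * y ^ (κ - 1)) / (1 + (y ^ κ) ^ 2) := by positivity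
    linarith
  -- continuity of h on [0, t_c]
  have hIcc : Set.Icc (0 : ℝ) t_c ⊆ Set.Ici 0 := fun x hx => hx.1
  have hconth : ContinuousOn h (Set.Icc 0 t_c) := by
    apply ContinuousOn.add
    · exact Real.continuous_arctan.comp_continuousOn
        (((hcont.mono hIcc).norm).rpow_const (fun x _ => Or.inr hκ0.le))
    · exact continuousOn_const.mul
        (continuousOn_id.rpow_const (fun x _ => Or.inr hα0.le))
  -- h is antitone on [0, t_c]
  have hanti : AntitoneOn h (Set.Icc 0 t_c) := by
    apply antitoneOn_of_deriv_nonpos (convex_Icc _ _) hconth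
    · intro x hx
      rw [interior_Icc] at hx
      obtain ⟨d, hd, _⟩ := hder x hx
      exact hd.differentiableAt.differentiableWithinAt
    · intro x hx
      rw [interior_Icc] at hx
      obtain ⟨d, hd, hd0⟩ := hder x hx
      rw [hd.deriv]; exact hd0
  have hmem0 : (0 : ℝ) ∈ Set.Icc (0 : ℝ) t_c := ⟨le_refl _, htc.le⟩
  have hmemtc : t_c ∈ Set.Icc (0 : ℝ) t_c := ⟨htc.le, le_refl _⟩
  have hle := hanti hmem0 hmemtc htc.le
  -- evaluate h at 0 and t_c
  have htcα : (0 : ℝ) < t_c ^ α := Real.rpow_pos_of_pos htc _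
  have hh0 : h 0 = Real.arctan (‖ε 0‖ ^ κ) := by
    simp [hh, hg, hφ, Real.zero_rpow hα0.ne']
  have hhtc : h t_c = Real.arctan (‖ε t_c‖ ^ κ) + π / (2 * α) := by
    simp only [hh, hg, hφ]
    congr 1
    field_simp
  have h0lt : h 0 < π / 2 := by
    rw [hh0]; exact Real.arctan_lt_pi_div_two _
  have htcge : π / 2 ≤ h t_c := by
    rw [hhtc]
    have h1 : 0 ≤ Real.arctan (‖ε t_c‖ ^ κ) := by
      rw [← Real.arctan_zero]
      exact Real.arctan_strictMono.monotone (Real.rpow_nonneg (norm_nonneg _) _)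
    have h2 : π / 2 ≤ π / (2 * α) := by
      rw [div_le_div_iff₀ (by norm_num) (by positivity)]
      nlinarith [Real.pi_pos]
    linarith
  exact lt_irrefl _ (lt_of_le_of_lt (htcge.trans hle) h0lt)
end

section
/- Let n ≥ 1, and let t_c > 0, 0 < κ < 1, 0 < α ≤ 1, ζ > 0 be real parameters, and let δ : [0, ∞) → ℝⁿ be a continuous noise function satisfying ‖δ(t)‖ < ζ for all t ≥ 0. Suppose ε : [0, ∞) → ℝⁿ is continuous, with ε(0) = ε₀, and at every time t > 0 with ε(t) ≠ 0 the function ε is differentiable and satisfies the noise-polluted PTC-NT-FOZNN error dynamics ε̇(t) = −(π t^{α−1}/(2 κ t_c^{α})) (‖ε(t)‖^{1−κ} + ‖ε(t)‖^{1+κ}) ε(t)/‖ε(t)‖ − ζ ε(t)/‖ε(t)‖ + δ(t). Then there exists a time T with 0 ≤ T ≤ t_c such that ε(T) = 0; i.e., the residual error reaches zero within the predefined time t_c despite the additive noise. -/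
open Real

private lemma hasDerivAt_norm_aux {n : ℕ} {f : ℝ → EuclideanSpace ℝ (Fin n)}
    {f' : EuclideanSpace ℝ (Fin n)} {x : ℝ}
    (hf : HasDerivAt f f' x) (h0 : f x ≠ 0) :
    HasDerivAt (fun t => ‖f t‖) ((inner ℝ (f x) f' : ℝ) / ‖f x‖) x := by
  have hx : ‖f x‖ ≠ 0 := norm_ne_zero_iff.mpr h0
  have hne : (‖f ·‖ ^ 2) x ≠ 0 := pow_ne_zero _ hx
  have h1 := hf.norm_sq.sqrt hne
  have h2 : (fun y => Real.sqrt ((‖f ·‖ ^ 2) y)) = fun y => ‖f y‖ := by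
    funext y; exact Real.sqrt_sq (norm_nonneg _)
  rw [h2] at h1
  have h3 : Real.sqrt ((‖f ·‖ ^ 2) x) = ‖f x‖ := Real.sqrt_sq (norm_nonneg _)
  rw [h3] at h1
  convert h1 using 1
  field_simp

/-- Predefined-time convergence of the noise-polluted PTC-NT-FOZNN error dynamics.
If `ε : [0, ∞) → ℝⁿ` is continuous with `ε 0 = ε₀`, the noise `δ` is continuous with
`‖δ(t)‖ < ζ` for all `t ≥ 0`, and `ε` satisfies the dynamics
`ε̇(t) = −(π t^{α−1}/(2 κ t_c^{α})) (‖ε(t)‖^{1−κ} + ‖ε(t)‖^{1+κ}) ε(t)/‖ε(t)‖ − ζ ε(t)/‖ε(t)‖ + δ(t)`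
at every `t > 0` with `ε t ≠ 0`, then `ε` reaches `0` at some time `T ∈ [0, t_c]`. -/
theorem ptc_nt_foznn_noisy_predefined_time_convergence
    (n : ℕ) (hn : 1 ≤ n) (t_c κ α ζ : ℝ)
    (htc : 0 < t_c) (hκ0 : 0 < κ) (hκ1 : κ < 1) (hα0 : 0 < α) (hα1 : α ≤ 1) (hζ : 0 < ζ)
    (δ : ℝ → EuclideanSpace ℝ (Fin n))
    (hδcont : ContinuousOn δ (Set.Ici (0 : ℝ)))
    (hδbound : ∀ t : ℝ, 0 ≤ t → ‖δ t‖ < ζ)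
    (ε : ℝ → EuclideanSpace ℝ (Fin n)) (ε₀ : EuclideanSpace ℝ (Fin n))
    (hcont : ContinuousOn ε (Set.Ici (0 : ℝ)))
    (hinit : ε 0 = ε₀)
    (hdyn : ∀ t : ℝ, 0 < t → ε t ≠ 0 →
      HasDerivAt ε
        (-(π * t ^ (α - 1) / (2 * κ * t_c ^ α) *
            (‖ε t‖ ^ (1 - κ) + ‖ε t‖ ^ (1 + κ))) • (‖ε t‖⁻¹ • ε t)
          - ζ • (‖ε t‖⁻¹ • ε t) + δ t) t) :
    ∃ T : ℝ, 0 ≤ T ∧ T ≤ t_c ∧ ε T = 0 := by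
  by_contra hcon
  push_neg at hcon
  have hεne : ∀ t, 0 ≤ t → t ≤ t_c → ε t ≠ 0 := hcon
  have htcα : (0:ℝ) < t_c ^ α := Real.rpow_pos_of_pos htc α
  set C : ℝ := π / (2 * α * t_c ^ α) with hCdef
  have hCpos : 0 < C := by rw [hCdef]; positivity
  set F : ℝ → ℝ := fun s => Real.arctan (‖ε s‖ ^ κ) + C * s ^ α with hFdef
  -- derivative bound
  have key : ∀ t, 0 < t → t ≤ t_c → deriv F t < 0 := by
    intro t ht htle
    have hne := hεne t ht.le htle
    have hV : 0 < ‖ε t‖ := norm_pos_iff.mpr hne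
    have hεd := hdyn t ht hne
    set S : ℝ := ‖ε t‖ ^ (1 - κ) + ‖ε t‖ ^ (1 + κ) with hSdef
    have hS1 : (0:ℝ) < ‖ε t‖ ^ (1 - κ) := Real.rpow_pos_of_pos hV _
    have hS2 : (0:ℝ) < ‖ε t‖ ^ (1 + κ) := Real.rpow_pos_of_pos hV _
    have hSpos : 0 < S := by rw [hSdef]; linarith
    set a : ℝ := π * t ^ (α - 1) / (2 * κ * t_c ^ α) with hadef
    have htpow : (0:ℝ) < t ^ (α - 1) := Real.rpow_pos_of_pos ht _
    have hapos : 0 < a := by rw [hadef]; positivity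
    have hVd := hasDerivAt_norm_aux hεd hne
    set e' := -(a * S) • (‖ε t‖⁻¹ • ε t) - ζ • (‖ε t‖⁻¹ • ε t) + δ t with he'
    set d : ℝ := (inner ℝ (ε t) e' : ℝ) / ‖ε t‖ with hddef
    have hd : d < -(a * S) := by
      have h1 : (inner ℝ (ε t) (δ t) : ℝ) ≤ ‖ε t‖ * ‖δ t‖ := real_inner_le_norm _ _
      have h2 : ‖δ t‖ < ζ := hδbound t ht.le
      have h3 : (inner ℝ (ε t) e' : ℝ)
          = (-(a * S) - ζ) * ‖ε t‖ + (inner ℝ (ε t) (δ t) : ℝ) := by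
        rw [he']
        simp only [inner_add_right, inner_sub_right, inner_smul_right,
          real_inner_self_eq_norm_sq]
        field_simp
      rw [hddef, h3, div_lt_iff₀ hV]
      nlinarith
    have hWd : HasDerivAt (fun s => Real.arctan (‖ε s‖ ^ κ))
        (1 / (1 + (‖ε t‖ ^ κ) ^ 2) * (d * κ * ‖ε t‖ ^ (κ - 1))) t :=
      (hVd.rpow_const (Or.inl hV.ne')).arctan
    have hPd : HasDerivAt (fun s : ℝ => C * s ^ α) (C * (α * t ^ (α - 1))) t :=
      (Real.hasDerivAt_rpow_const (Or.inl ht.ne')).const_mul C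
    have hFd : HasDerivAt F
        (1 / (1 + (‖ε t‖ ^ κ) ^ 2) * (d * κ * ‖ε t‖ ^ (κ - 1)) + C * (α * t ^ (α - 1))) t :=
      hWd.add hPd
    rw [hFd.deriv]
    have hP : (0:ℝ) < 1 + (‖ε t‖ ^ κ) ^ 2 := by positivity
    have hκ1' : (0:ℝ) < ‖ε t‖ ^ (κ - 1) := Real.rpow_pos_of_pos hV _
    have hid : ‖ε t‖ ^ (κ - 1) * S = 1 + (‖ε t‖ ^ κ) ^ 2 := by
      have e1 : ‖ε t‖ ^ (κ - 1) * ‖ε t‖ ^ (1 - κ) = 1 := by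
        rw [← Real.rpow_add hV]; norm_num
      have e2 : ‖ε t‖ ^ (κ - 1) * ‖ε t‖ ^ (1 + κ) = ‖ε t‖ ^ κ * ‖ε t‖ ^ κ := by
        rw [← Real.rpow_add hV, ← Real.rpow_add hV]; ring_nf
      rw [hSdef, mul_add, e1, e2, sq]
    have step1 : 1 / (1 + (‖ε t‖ ^ κ) ^ 2) * (d * κ * ‖ε t‖ ^ (κ - 1))
        < 1 / (1 + (‖ε t‖ ^ κ) ^ 2) * (-(a * S) * κ * ‖ε t‖ ^ (κ - 1)) := by
      apply mul_lt_mul_of_pos_left _ (by positivity)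
      exact mul_lt_mul_of_pos_right (mul_lt_mul_of_pos_right hd hκ0) hκ1'
    have step2 : 1 / (1 + (‖ε t‖ ^ κ) ^ 2) * (-(a * S) * κ * ‖ε t‖ ^ (κ - 1))
        = -(C * (α * t ^ (α - 1))) := by
      have h4 : -(a * S) * κ * ‖ε t‖ ^ (κ - 1)
          = -(κ * a) * (‖ε t‖ ^ (κ - 1) * S) := by ring
      rw [h4, hid, hadef, hCdef]
      field_simp
    linarith
  -- continuity of F on [0, t_c]
  have hFcont : ContinuousOn F (Set.Icc 0 t_c) := by
    apply ContinuousOn.add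
    · exact Real.continuous_arctan.comp_continuousOn
        (((hcont.mono Set.Icc_subset_Ici_self).norm).rpow_const
          (fun x _ => Or.inr hκ0.le))
    · exact (continuous_const.mul (continuous_iff_continuousAt.mpr
        (fun x => Real.continuousAt_rpow_const x α (Or.inr hα0.le)))).continuousOn
  -- choose t₀
  set B : ℝ := Real.arctan (‖ε t_c‖ ^ κ) with hBdef
  have hVtc : 0 < ‖ε t_c‖ := norm_pos_iff.mpr (hεne t_c htc.le le_rfl)
  have hBpos : 0 < B := by
    have := Real.arctan_strictMono (Real.rpow_pos_of_pos hVtc κ)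
    rwa [Real.arctan_zero] at this
  set m : ℝ := min ((2 * B / π) ^ (α⁻¹)) (1 / 2) with hmdef
  have hmpos : 0 < m := lt_min (Real.rpow_pos_of_pos (by positivity) _) (by norm_num)
  have hm1 : m ≤ 1 := le_trans (min_le_right _ _) (by norm_num)
  set t₀ : ℝ := t_c * m with ht₀def
  have ht₀pos : 0 < t₀ := mul_pos htc hmpos
  have ht₀lt : t₀ < t_c := by
    have hm : m < 1 := lt_of_le_of_lt (min_le_right _ _) (by norm_num)
    rw [ht₀def]; nlinarith
  have hanti : StrictAntiOn F (Set.Icc t₀ t_c) :=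
    strictAntiOn_of_deriv_neg (convex_Icc _ _)
      (hFcont.mono (Set.Icc_subset_Icc_left ht₀pos.le))
      (fun x hx => by
        rw [interior_Icc] at hx
        exact key x (ht₀pos.trans hx.1) hx.2.le)
  have hlt := hanti (Set.left_mem_Icc.mpr ht₀lt.le) (Set.right_mem_Icc.mpr ht₀lt.le) ht₀lt
  -- hlt : F t_c < F t₀
  have hmα : m ^ α ≤ 2 * B / π := by
    have h1 : m ^ α ≤ ((2 * B / π) ^ (α⁻¹)) ^ α :=
      Real.rpow_le_rpow hmpos.le (min_le_left _ _) hα0.le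
    rwa [← Real.rpow_mul (by positivity), inv_mul_cancel₀ hα0.ne', Real.rpow_one] at h1
  have hmα1 : m ^ α ≤ 1 := Real.rpow_le_one hmpos.le hm1 hα0.le
  have ht₀α : t₀ ^ α = t_c ^ α * m ^ α := Real.mul_rpow htc.le hmpos.le
  have hq : C * t_c ^ α = π / (2 * α) := by
    rw [hCdef]; field_simp
  have hq1 : π / 2 ≤ π / (2 * α) := by
    apply div_le_div_of_nonneg_left pi_pos.le (by positivity) (by linarith)
  have hFtc : F t_c = B + C * t_c ^ α := rfl
  have hFt₀ : F t₀ = Real.arctan (‖ε t₀‖ ^ κ) + C * t₀ ^ α := rfl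
  have harc : Real.arctan (‖ε t₀‖ ^ κ) < π / 2 := Real.arctan_lt_pi_div_two _
  have hCt₀ : C * t₀ ^ α = π / (2 * α) * m ^ α := by rw [ht₀α, ← mul_assoc, hq]
  rw [hFtc, hFt₀, hCt₀, hq] at hlt
  have h5 : m ^ α * π ≤ 2 * B := (le_div_iff₀ pi_pos).mp hmα
  nlinarith [mul_nonneg (by linarith : (0:ℝ) ≤ π / (2 * α) - π / 2)
      (by linarith : (0:ℝ) ≤ 1 - m ^ α), pi_pos]
end

section
/- Let n ≥ 1, t_c > 0, 0 < κ < 1, 0 < α ≤ 1, ζ > 0, and let δ : (0, ∞) → ℝⁿ satisfy ‖δ(t)‖ ≤ ζ for all t. Suppose ε : (0, ∞) → ℝⁿ is differentiable at a point t ∈ (0, t_c] with ε(t) ≠ 0 and satisfies ε̇(t) = −(π t^{α−1}/(2 κ t_c^{α})) (‖ε(t)‖^{1−κ} + ‖ε(t)‖^{1+κ}) ε(t)/‖ε(t)‖ − ζ ε(t)/‖ε(t)‖ + δ(t). Then V(s) = ‖ε(s)‖ is differentiable at t and V̇(t) ≤ −(π/(2 κ t_c)) (V(t)^{1−κ} +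 V(t)^{1+κ}) − (ζ − ‖δ(t)‖). -/
open Real

/-- Lyapunov derivative bound for the noise-polluted PTC-NT-FOZNN error dynamics.
If `‖δ(s)‖ ≤ ζ` on `(0, ∞)` and `ε` satisfies the noisy dynamics at `t ∈ (0, t_c]` with
`ε t ≠ 0`, then `V(s) = ‖ε(s)‖` is differentiable at `t` and
`V̇(t) ≤ −(π/(2 κ t_c)) (V^{1−κ} + V^{1+κ}) − (ζ − ‖δ(t)‖)`. -/
theorem ptc_nt_foznn_lyapunov_derivative_noisy_bound
    (n : ℕ) (hn : 1 ≤ n) (t_c κ α ζ t : ℝ)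
    (htc : 0 < t_c) (hκ0 : 0 < κ) (hκ1 : κ < 1) (hα0 : 0 < α) (hα1 : α ≤ 1) (hζ : 0 < ζ)
    (δ : ℝ → EuclideanSpace ℝ (Fin n))
    (hδbound : ∀ s : ℝ, 0 < s → ‖δ s‖ ≤ ζ)
    (ht0 : 0 < t) (httc : t ≤ t_c)
    (ε : ℝ → EuclideanSpace ℝ (Fin n)) (hne : ε t ≠ 0)
    (hdyn : HasDerivAt ε
      (-(π * t ^ (α - 1) / (2 * κ * t_c ^ α) *
          (‖ε t‖ ^ (1 - κ) + ‖ε t‖ ^ (1 + κ))) • (‖ε t‖⁻¹ • ε t)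
        - ζ • (‖ε t‖⁻¹ • ε t) + δ t) t) :
    ∃ D : ℝ, HasDerivAt (fun s => ‖ε s‖) D t ∧
      D ≤ -(π / (2 * κ * t_c)) * (‖ε t‖ ^ (1 - κ) + ‖ε t‖ ^ (1 + κ)) - (ζ - ‖δ t‖) := by
  set c : ℝ := π * t ^ (α - 1) / (2 * κ * t_c ^ α) with hc
  set e' : EuclideanSpace ℝ (Fin n) :=
    -(c * (‖ε t‖ ^ (1 - κ) + ‖ε t‖ ^ (1 + κ))) • (‖ε t‖⁻¹ • ε t)
      - ζ • (‖ε t‖⁻¹ • ε t) + δ t with he'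
  have hnorm_pos : (0:ℝ) < ‖ε t‖ := norm_pos_iff.mpr hne
  have hsq_ne : ‖ε t‖ ^ 2 ≠ 0 := by positivity
  have h1 : HasDerivAt (fun s => ‖ε s‖ ^ 2) (2 * inner ℝ (ε t) e') t := hdyn.norm_sq
  have h2 := h1.sqrt hsq_ne
  have h3 : HasDerivAt (fun s => ‖ε s‖) (2 * inner ℝ (ε t) e' / (2 * ‖ε t‖)) t := by
    have : (fun s => Real.sqrt (‖ε s‖ ^ 2)) = fun s => ‖ε s‖ := by
      funext s; exact Real.sqrt_sq (norm_nonneg _)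
    rw [this, Real.sqrt_sq (norm_nonneg _)] at h2
    exact h2
  refine ⟨_, h3, ?_⟩
  have hinner_self : (inner ℝ (ε t) (ε t) : ℝ) = ‖ε t‖ ^ 2 := real_inner_self_eq_norm_sq _
  have hiu : (inner ℝ (ε t) (‖ε t‖⁻¹ • ε t) : ℝ) = ‖ε t‖ := by
    rw [real_inner_smul_right, hinner_self]
    field_simp
  have hie : (inner ℝ (ε t) e' : ℝ)
      = -(c * (‖ε t‖ ^ (1 - κ) + ‖ε t‖ ^ (1 + κ))) * ‖ε t‖ - ζ * ‖ε t‖ + inner ℝ (ε t) (δ t) := by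
    simp only [he', inner_add_right, inner_sub_right, real_inner_smul_right, hinner_self]
    field_simp
  have hCS : (inner ℝ (ε t) (δ t) : ℝ) ≤ ‖ε t‖ * ‖δ t‖ := real_inner_le_norm _ _
  have hD : 2 * inner ℝ (ε t) e' / (2 * ‖ε t‖)
      ≤ -(c * (‖ε t‖ ^ (1 - κ) + ‖ε t‖ ^ (1 + κ))) - ζ + ‖δ t‖ := by
    rw [hie]
    rw [div_le_iff₀ (by positivity)]
    nlinarith [hCS, hnorm_pos]
  refine hD.trans ?_
  have hS : (0:ℝ) < ‖ε t‖ ^ (1 - κ) + ‖ε t‖ ^ (1 + κ) := by positivity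
  have hcc : π / (2 * κ * t_c) ≤ c := by
    rw [hc]
    have h1 : t_c ^ (α - 1) ≤ t ^ (α - 1) :=
      Real.rpow_le_rpow_of_nonpos ht0 httc (by linarith)
    have h2 : t_c ^ (α - 1) = t_c ^ α / t_c := by
      rw [eq_div_iff htc.ne', ← Real.rpow_add_one htc.ne']
      norm_num
    have htca : (0:ℝ) < t_c ^ α := Real.rpow_pos_of_pos htc α
    rw [div_le_div_iff₀ (by positivity) (by positivity)]
    have hπ : (0:ℝ) < π := Real.pi_pos
    calc π * (2 * κ * t_c ^ α) = π * (t_c ^ α / t_c) * (2 * κ * t_c) := by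
          field_simp
      _ = π * t_c ^ (α - 1) * (2 * κ * t_c) := by rw [h2]
      _ ≤ π * t ^ (α - 1) * (2 * κ * t_c) := by
          gcongr
  have : c * (‖ε t‖ ^ (1 - κ) + ‖ε t‖ ^ (1 + κ))
      ≥ π / (2 * κ * t_c) * (‖ε t‖ ^ (1 - κ) + ‖ε t‖ ^ (1 + κ)) := by
    exact mul_le_mul_of_nonneg_right hcc hS.le
  linarith
end

section
/- Let t_c > 0 and 0 < κ < 1. Suppose V : [0, ∞) → ℝ is continuous, nonnegative, V(0) = V₀ > 0, and V is differentiable with V̇(t) ≤ −(π/(2 κ t_c)) (V(t)^{1−κ} + V(t)^{1+κ}) at every t > 0 with V(t) > 0. Then there exists T with 0 < T ≤ (2 t_c/π) · arctan(V₀^{κ}) such that V(T) = 0; in particular, since arctan(V₀^{κ}) < π/2, T ≤ t_c. -/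
open Real

/-- Settling-time comparison lemma. If `V : [0, ∞) → ℝ` is continuous,
nonnegative, `V 0 = V₀ > 0`, and `V̇(t) ≤ −(π/(2 κ t_c)) (V^{1−κ} + V^{1+κ})` whenever
`t > 0` and `V t > 0`, then `V` vanishes at some `T` with
`0 < T ≤ (2 t_c/π) arctan(V₀^κ)`; in particular `T ≤ t_c`. -/
theorem settling_time_comparison_lemma
    (t_c κ V₀ : ℝ) (htc : 0 < t_c) (hκ0 : 0 < κ) (hκ1 : κ < 1) (hV0 : 0 < V₀)
    (V : ℝ → ℝ)
    (hcont : ContinuousOn V (Set.Ici (0 : ℝ)))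
    (hnonneg : ∀ t : ℝ, 0 ≤ t → 0 ≤ V t)
    (hinit : V 0 = V₀)
    (hdiff : ∀ t : ℝ, 0 < t → 0 < V t →
      ∃ D : ℝ, HasDerivAt V D t ∧
        D ≤ -(π / (2 * κ * t_c)) * (V t ^ (1 - κ) + V t ^ (1 + κ))) :
    ∃ T : ℝ, 0 < T ∧ T ≤ (2 * t_c / π) * Real.arctan (V₀ ^ κ) ∧ V T = 0 ∧ T ≤ t_c := by
  have hπ : (0 : ℝ) < π := Real.pi_pos
  set Ts : ℝ := (2 * t_c / π) * Real.arctan (V₀ ^ κ) with hTs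
  have harc0 : 0 < Real.arctan (V₀ ^ κ) := by rw [← Real.arctan_zero]; exact Real.arctan_strictMono (Real.rpow_pos_of_pos hV0 κ)
  have hTspos : 0 < Ts := by positivity
  have hTslt : Ts ≤ t_c := by
    have h1 : Real.arctan (V₀ ^ κ) < π / 2 := Real.arctan_lt_pi_div_two _
    have : Ts < (2 * t_c / π) * (π / 2) := by
      apply mul_lt_mul_of_pos_left h1
      positivity
    calc Ts ≤ (2 * t_c / π) * (π / 2) := le_of_lt this
      _ = t_c := by field_simp
  -- the set of zeros in [0, Ts]
  set S : Set ℝ := {t ∈ Set.Icc (0:ℝ) Ts | V t = 0} with hS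
  rcases S.eq_empty_or_nonempty with hempty | hne
  · -- V > 0 on [0, Ts]; derive contradiction
    exfalso
    have hpos : ∀ t ∈ Set.Icc (0:ℝ) Ts, 0 < V t := by
      intro t ht
      rcases lt_or_eq_of_le (hnonneg t ht.1) with h | h
      · exact h
      · exact absurd (show t ∈ S from ⟨ht, h.symm⟩) (by simp [hempty])
    -- h t = arctan (V t ^ κ) + π/(2 t_c) * t
    set h : ℝ → ℝ := fun t => Real.arctan (V t ^ κ) + π / (2 * t_c) * t with hh
    have hIcc : Set.Icc (0:ℝ) Ts ⊆ Set.Ici (0:ℝ) := fun x hx => hx.1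
    have hconth : ContinuousOn h (Set.Icc 0 Ts) := by
      apply ContinuousOn.add
      · exact Real.continuous_arctan.comp_continuousOn
          (((hcont.mono hIcc)).rpow_const (fun x hx => Or.inr hκ0.le))
      · exact (continuous_const.mul continuous_id).continuousOn
    have hderiv : ∀ t ∈ interior (Set.Icc (0:ℝ) Ts),
        ∃ d, HasDerivAt h d t ∧ d ≤ 0 := by
      intro t ht
      rw [interior_Icc] at ht
      have htpos : 0 < t := ht.1
      have hVt : 0 < V t := hpos t ⟨ht.1.le, ht.2.le⟩
      obtain ⟨D, hD, hDle⟩ := hdiff t htpos hVt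
      have h1 : HasDerivAt (fun s => V s ^ κ) (D * κ * V t ^ (κ - 1)) t :=
        hD.rpow_const (Or.inl hVt.ne')
      have h2 : HasDerivAt (fun s => Real.arctan (V s ^ κ))
          ((1 / (1 + (V t ^ κ) ^ 2)) * (D * κ * V t ^ (κ - 1))) t :=
        h1.arctan
      have h3 : HasDerivAt h
          ((1 / (1 + (V t ^ κ) ^ 2)) * (D * κ * V t ^ (κ - 1)) + π / (2 * t_c)) t := by
        have := h2.add ((hasDerivAt_id t).const_mul (π / (2 * t_c)))
        simpa [hh, mul_comm, Pi.add_def] using this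
      refine ⟨_, h3, ?_⟩
      -- algebra
      have hA : (V t ^ κ) ^ 2 = V t ^ (κ + κ) := by
        rw [sq, ← Real.rpow_add hVt]
      have key : D * κ * V t ^ (κ - 1) ≤ -(π / (2 * t_c)) * (1 + (V t ^ κ) ^ 2) := by
        have hmul : D * (κ * V t ^ (κ - 1)) ≤
            (-(π / (2 * κ * t_c)) * (V t ^ (1 - κ) + V t ^ (1 + κ))) * (κ * V t ^ (κ - 1)) := by
          apply mul_le_mul_of_nonneg_right hDle
          positivity
        have e1 : V t ^ (1 - κ) * V t ^ (κ - 1) = 1 := by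
          rw [← Real.rpow_add hVt]; norm_num
        have e2 : V t ^ (1 + κ) * V t ^ (κ - 1) = V t ^ (κ + κ) := by
          rw [← Real.rpow_add hVt]; ring_nf
        calc D * κ * V t ^ (κ - 1) = D * (κ * V t ^ (κ - 1)) := by ring
          _ ≤ (-(π / (2 * κ * t_c)) * (V t ^ (1 - κ) + V t ^ (1 + κ))) * (κ * V t ^ (κ - 1)) := hmul
          _ = -(π / (2 * κ * t_c)) * κ * (V t ^ (1 - κ) * V t ^ (κ - 1) + V t ^ (1 + κ) * V t ^ (κ - 1)) := by ring
          _ = -(π / (2 * t_c)) * (1 + V t ^ (κ + κ)) := by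
              rw [e1, e2]; field_simp
          _ = -(π / (2 * t_c)) * (1 + (V t ^ κ) ^ 2) := by rw [hA]
      have hApos : 0 < 1 + (V t ^ κ) ^ 2 := by positivity
      have : (1 / (1 + (V t ^ κ) ^ 2)) * (D * κ * V t ^ (κ - 1)) ≤
          (1 / (1 + (V t ^ κ) ^ 2)) * (-(π / (2 * t_c)) * (1 + (V t ^ κ) ^ 2)) := by
        apply mul_le_mul_of_nonneg_left key
        positivity
      have heq : (1 / (1 + (V t ^ κ) ^ 2)) * (-(π / (2 * t_c)) * (1 + (V t ^ κ) ^ 2))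
          = -(π / (2 * t_c)) := by field_simp
      linarith [this, heq ▸ this]
    have hdiffOn : DifferentiableOn ℝ h (interior (Set.Icc (0:ℝ) Ts)) := by
      intro t ht
      obtain ⟨d, hd, _⟩ := hderiv t ht
      exact hd.differentiableAt.differentiableWithinAt
    have hderiv_nonpos : ∀ t ∈ interior (Set.Icc (0:ℝ) Ts), deriv h t ≤ 0 := by
      intro t ht
      obtain ⟨d, hd, hd0⟩ := hderiv t ht
      rw [hd.deriv]; exact hd0
    have hanti : AntitoneOn h (Set.Icc 0 Ts) :=
      antitoneOn_of_deriv_nonpos (convex_Icc _ _) hconth hdiffOn hderiv_nonpos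
    have h0mem : (0:ℝ) ∈ Set.Icc (0:ℝ) Ts := ⟨le_refl _, hTspos.le⟩
    have hTmem : Ts ∈ Set.Icc (0:ℝ) Ts := ⟨hTspos.le, le_refl _⟩
    have hle : h Ts ≤ h 0 := hanti h0mem hTmem hTspos.le
    have hh0 : h 0 = Real.arctan (V₀ ^ κ) := by simp [hh, hinit]
    have hhTs : h Ts = Real.arctan (V (Ts) ^ κ) + π / (2 * t_c) * Ts := rfl
    have hTsval : π / (2 * t_c) * Ts = Real.arctan (V₀ ^ κ) := by
      rw [hTs]; field_simp
    have harcT : 0 < Real.arctan (V Ts ^ κ) :=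
      by rw [← Real.arctan_zero]; exact Real.arctan_strictMono (Real.rpow_pos_of_pos (hpos Ts hTmem) κ)
    rw [hh0, hhTs, hTsval] at hle
    linarith
  · -- take T = sInf S
    have hSclosed : IsClosed S := by
      have : S = Set.Icc (0:ℝ) Ts ∩ V ⁻¹' {0} := by
        ext x; simp [hS, Set.mem_sep_iff, and_comm]
      rw [this]
      exact (hcont.mono (fun x hx => hx.1 : Set.Icc (0:ℝ) Ts ⊆ Set.Ici 0)).preimage_isClosed_of_isClosed
        isClosed_Icc isClosed_singleton
    have hbdd : BddBelow S := ⟨0, fun x hx => hx.1.1⟩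
    set T := sInf S with hT
    have hTmem : T ∈ S := hSclosed.csInf_mem hne hbdd
    have hT0 : 0 ≤ T := hTmem.1.1
    have hTz : V T = 0 := hTmem.2
    have hTpos : 0 < T := by
      rcases lt_or_eq_of_le hT0 with h | h
      · exact h
      · exfalso; rw [← h] at hTz; rw [hinit] at hTz; linarith
    exact ⟨T, hTpos, le_trans hTmem.1.2 (le_refl _), hTz, le_trans hTmem.1.2 hTslt⟩
end

section
/- Let t_c > 0, 0 < κ < 1, and V₀ > 0. The function v(t) = (tan(arctan(V₀^{κ}) − π t/(2 t_c)))^{1/κ}, defined for 0 ≤ t ≤ T* where T* = (2 t_c/π) arctan(V₀^{κ}), satisfies v(0) = V₀, v(T*) = 0, v(t) > 0 for 0 ≤ t < T*, and solves the ordinary differential equation v̇(t) = −(π/(2 κ t_c)) (v(t)^{1−κ} + v(t)^{1+κ}) at every t ∈ (0, T*). -/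
open Real

/-- The explicit solution `v(t) = (tan(arctan(V₀^κ) − π t/(2 t_c)))^{1/κ}` of the
scalar comparison ODE on `[0, T*]`, `T* = (2 t_c/π) arctan(V₀^κ)`: it satisfies `v 0 = V₀`,
`v T* = 0`, `v t > 0` for `0 ≤ t < T*`, and
`v̇(t) = −(π/(2 κ t_c)) (v^{1−κ} + v^{1+κ})` for `t ∈ (0, T*)`. -/
theorem comparison_ode_explicit_solution
    (t_c κ V₀ : ℝ) (htc : 0 < t_c) (hκ0 : 0 < κ) (hκ1 : κ < 1) (hV0 : 0 < V₀) :
    let Tstar : ℝ := (2 * t_c / π) * Real.arctan (V₀ ^ κ)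
    let v : ℝ → ℝ := fun t =>
      (Real.tan (Real.arctan (V₀ ^ κ) - π * t / (2 * t_c))) ^ (1 / κ)
    v 0 = V₀ ∧ v Tstar = 0 ∧ (∀ t : ℝ, 0 ≤ t → t < Tstar → 0 < v t) ∧
      ∀ t : ℝ, 0 < t → t < Tstar →
        HasDerivAt v (-(π / (2 * κ * t_c)) * (v t ^ (1 - κ) + v t ^ (1 + κ))) t := by
  intro Tstar v
  have hπ : (0:ℝ) < π := Real.pi_pos
  have hVκ : 0 < V₀ ^ κ := Real.rpow_pos_of_pos hV0 κ
  set A : ℝ := Real.arctan (V₀ ^ κ) with hAdef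
  have hA0 : 0 < A := by
    have := Real.arctan_strictMono hVκ
    rwa [Real.arctan_zero] at this
  have hA2 : A < π / 2 := Real.arctan_lt_pi_div_two _
  -- θ bounds
  have hθlt : ∀ t : ℝ, 0 ≤ t → A - π * t / (2 * t_c) ≤ A := by
    intro t ht
    have : 0 ≤ π * t / (2 * t_c) := by positivity
    linarith
  have hθpos : ∀ t : ℝ, t < Tstar → 0 < A - π * t / (2 * t_c) := by
    intro t ht
    have h1 : π * t / (2 * t_c) < A := by
      have : π * t < π * Tstar := by nlinarith
      have hT : π * Tstar = 2 * t_c * A := by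
        simp only [Tstar]
        field_simp
        rfl
      rw [div_lt_iff₀ (by positivity)]
      nlinarith
    linarith
  have htanpos : ∀ t : ℝ, 0 ≤ t → t < Tstar → 0 < Real.tan (A - π * t / (2 * t_c)) := by
    intro t ht0 ht1
    exact Real.tan_pos_of_pos_of_lt_pi_div_two (hθpos t ht1)
      (lt_of_le_of_lt (hθlt t ht0) hA2)
  refine ⟨?_, ?_, ?_, ?_⟩
  · -- v 0 = V₀
    show Real.tan (A - π * 0 / (2 * t_c)) ^ (1 / κ) = V₀
    have : A - π * 0 / (2 * t_c) = A := by ring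
    rw [this, hAdef, Real.tan_arctan, ← Real.rpow_mul hV0.le,
      mul_one_div_cancel hκ0.ne', Real.rpow_one]
  · -- v Tstar = 0
    show Real.tan (A - π * Tstar / (2 * t_c)) ^ (1 / κ) = 0
    have : A - π * Tstar / (2 * t_c) = 0 := by
      simp only [Tstar, hAdef]
      field_simp
      ring
    rw [this, Real.tan_zero, Real.zero_rpow (by positivity)]
  · intro t ht0 ht1
    exact Real.rpow_pos_of_pos (htanpos t ht0 ht1) _
  · intro t ht0 ht1
    set θ : ℝ := A - π * t / (2 * t_c) with hθdef
    have hθ2 : θ < π / 2 := lt_of_le_of_lt (hθlt t ht0.le) hA2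
    have hθp : 0 < θ := by rw [hθdef]; exact hθpos t ht1
    have hcos : Real.cos θ ≠ 0 := by
      have := Real.cos_pos_of_mem_Ioo ⟨lt_trans (neg_lt_zero.mpr (half_pos hπ)) hθp, hθ2⟩
      exact this.ne'
    have hT : 0 < Real.tan θ := by rw [hθdef]; exact htanpos t ht0.le ht1
    -- derivative of inner function
    have hlin : HasDerivAt (fun s : ℝ => A - π * s / (2 * t_c)) (-(π / (2 * t_c))) t := by
      have h1 : HasDerivAt (fun s : ℝ => π * s / (2 * t_c)) (π / (2 * t_c)) t := by
        simpa using (((hasDerivAt_id t).const_mul π).div_const (2 * t_c))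
      simpa using h1.const_sub A
    have htan : HasDerivAt (fun s : ℝ => Real.tan (A - π * s / (2 * t_c)))
        (1 / Real.cos θ ^ 2 * -(π / (2 * t_c))) t :=
      (Real.hasDerivAt_tan hcos).comp (x := t) (h := fun s : ℝ => A - π * s / (2 * t_c)) hlin
    have hv : HasDerivAt v
        ((1 / Real.cos θ ^ 2 * -(π / (2 * t_c))) * (1 / κ) * Real.tan θ ^ (1 / κ - 1)) t :=
      htan.rpow_const (Or.inl hT.ne')
    convert hv using 1
    have hvt : v t = Real.tan θ ^ (1 / κ) := rfl
    have h1 : v t ^ (1 - κ) = Real.tan θ ^ (1 / κ - 1) := by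
      rw [hvt, ← Real.rpow_mul hT.le]
      congr 1
      field_simp
    have h2 : v t ^ (1 + κ) = Real.tan θ ^ (1 / κ - 1) * Real.tan θ ^ 2 := by
      rw [hvt, ← Real.rpow_mul hT.le, ← Real.rpow_natCast (Real.tan θ) 2,
        ← Real.rpow_add hT]
      congr 1
      push_cast
      field_simp
      ring
    rw [h1, h2]
    have hcossq : Real.cos θ ^ 2 = (1 + Real.tan θ ^ 2)⁻¹ :=
      (Real.inv_one_add_tan_sq hcos).symm
    rw [hcossq]
    have h1t : (0:ℝ) < 1 + Real.tan θ ^ 2 := by positivity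
    field_simp
end

section
/- Let n ≥ 1, t_c > 0, 0 < κ < 1, 0 < α ≤ 1, ζ > 0, and let δ : (0, ∞) → ℝⁿ satisfy ‖δ(t)‖ < ζ for all t. Suppose ε : (0, ∞) → ℝⁿ is differentiable at a point t > t_c with ε(t) ≠ 0 and satisfies the noise-polluted dynamics ε̇(t) = −(π t^{α−1}/(2 κ t_c^{α})) (‖ε(t)‖^{1−κ} + ‖ε(t)‖^{1+κ}) ε(t)/‖ε(t)‖ − ζ ε(t)/‖ε(t)‖ + δ(t). Then V(s) = ‖ε(s)‖ is differentiable at t and V̇(t) = −(π/(2 κ t_c)) (t/t_c)^{α−1} (V(t)^{1−κ} + V(t)^{1+κ}) − ζ + ⟨ε(t), δ(t)⟩/‖ε(t)‖ < 0. -/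
open Real
open scoped RealInnerProductSpace

private lemma hasDerivAt_norm_of_ne {n : ℕ} (ε : ℝ → EuclideanSpace ℝ (Fin n))
    (e' : EuclideanSpace ℝ (Fin n)) (t : ℝ)
    (hne : ε t ≠ 0) (h : HasDerivAt ε e' t) :
    HasDerivAt (fun s => ‖ε s‖) (⟪ε t, e'⟫ / ‖ε t‖) t := by
  have h2 := h.norm_sq
  have hpos : 0 < ‖ε t‖ := norm_pos_iff.2 hne
  have hsq : HasDerivAt (fun s => Real.sqrt (‖ε s‖ ^ 2))
      ((1 / (2 * Real.sqrt (‖ε t‖ ^ 2))) * (2 * ⟪ε t, e'⟫)) t :=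
    (Real.hasDerivAt_sqrt (by positivity)).comp t h2
  have heq : ∀ s, Real.sqrt (‖ε s‖ ^ 2) = ‖ε s‖ := fun s => Real.sqrt_sq (norm_nonneg _)
  rw [funext heq, Real.sqrt_sq (norm_nonneg _)] at hsq
  convert hsq using 1
  field_simp

/-- Strict negativity of the Lyapunov derivative after the predefined time.
If `‖δ(s)‖ < ζ` on `(0, ∞)` and `ε` satisfies the noise-polluted dynamics at a point
`t > t_c` with `ε t ≠ 0`, then `V(s) = ‖ε(s)‖` is differentiable at `t` with
`V̇(t) = −(π/(2 κ t_c)) (t/t_c)^{α−1} (V^{1−κ} + V^{1+κ}) − ζ + ⟨ε(t), δ(t)⟩/‖ε(t)‖ < 0`. -/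
theorem ptc_nt_foznn_lyapunov_derivative_noisy_after_tc
    (n : ℕ) (hn : 1 ≤ n) (t_c κ α ζ t : ℝ)
    (htc : 0 < t_c) (hκ0 : 0 < κ) (hκ1 : κ < 1) (hα0 : 0 < α) (hα1 : α ≤ 1) (hζ : 0 < ζ)
    (δ : ℝ → EuclideanSpace ℝ (Fin n))
    (hδbound : ∀ s : ℝ, 0 < s → ‖δ s‖ < ζ)
    (httc : t_c < t)
    (ε : ℝ → EuclideanSpace ℝ (Fin n)) (hne : ε t ≠ 0)
    (hdyn : HasDerivAt ε
      (-(π * t ^ (α - 1) / (2 * κ * t_c ^ α) *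
          (‖ε t‖ ^ (1 - κ) + ‖ε t‖ ^ (1 + κ))) • (‖ε t‖⁻¹ • ε t)
        - ζ • (‖ε t‖⁻¹ • ε t) + δ t) t) :
    HasDerivAt (fun s => ‖ε s‖)
      (-(π / (2 * κ * t_c)) * (t / t_c) ^ (α - 1) *
        (‖ε t‖ ^ (1 - κ) + ‖ε t‖ ^ (1 + κ)) - ζ + ⟪ε t, δ t⟫ / ‖ε t‖) t ∧
    -(π / (2 * κ * t_c)) * (t / t_c) ^ (α - 1) *
        (‖ε t‖ ^ (1 - κ) + ‖ε t‖ ^ (1 + κ)) - ζ + ⟪ε t, δ t⟫ / ‖ε t‖ < 0 := by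
  have hpos : 0 < ‖ε t‖ := norm_pos_iff.2 hne
  have ht0 : (0 : ℝ) < t := htc.trans httc
  -- coefficient identity
  have hcoef : π * t ^ (α - 1) / (2 * κ * t_c ^ α)
      = π / (2 * κ * t_c) * (t / t_c) ^ (α - 1) := by
    rw [Real.div_rpow ht0.le htc.le]
    have htcα : t_c ^ α = t_c ^ (α - 1) * t_c := by
      rw [← Real.rpow_add_one htc.ne' (α - 1)]; ring_nf
    rw [htcα]
    have h1 : t_c ^ (α - 1) ≠ 0 := (Real.rpow_pos_of_pos htc _).ne'
    field_simp
  -- inner product computation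
  have hself : ⟪ε t, ε t⟫ = ‖ε t‖ ^ 2 := real_inner_self_eq_norm_sq (ε t)
  set e' := (-(π * t ^ (α - 1) / (2 * κ * t_c ^ α) *
          (‖ε t‖ ^ (1 - κ) + ‖ε t‖ ^ (1 + κ)))) • (‖ε t‖⁻¹ • ε t)
        - ζ • (‖ε t‖⁻¹ • ε t) + δ t with he'
  have hinner : ⟪ε t, e'⟫ / ‖ε t‖
      = -(π / (2 * κ * t_c)) * (t / t_c) ^ (α - 1) *
        (‖ε t‖ ^ (1 - κ) + ‖ε t‖ ^ (1 + κ)) - ζ + ⟪ε t, δ t⟫ / ‖ε t‖ := by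
    rw [he']
    simp only [inner_add_right, inner_sub_right, real_inner_smul_right, hself]
    rw [hcoef]
    set I := ⟪ε t, δ t⟫
    set N := ‖ε t‖
    set C := π / (2 * κ * t_c) * (t / t_c) ^ (α - 1) * (N ^ (1 - κ) + N ^ (1 + κ)) with hC
    clear_value I N C
    have hκ' : κ ≠ 0 := hκ0.ne'
    have htc' : t_c ≠ 0 := htc.ne'
    rw [hC]
    field_simp
  have hderiv := hasDerivAt_norm_of_ne ε e' t hne hdyn
  rw [hinner] at hderiv
  refine ⟨hderiv, ?_⟩
  -- negativity
  have h1 : -(π / (2 * κ * t_c)) * (t / t_c) ^ (α - 1) *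
      (‖ε t‖ ^ (1 - κ) + ‖ε t‖ ^ (1 + κ)) < 0 := by
    have hp1 : 0 < π / (2 * κ * t_c) := by positivity
    have hp2 : 0 < (t / t_c) ^ (α - 1) := Real.rpow_pos_of_pos (by positivity) _
    have hp3 : 0 < ‖ε t‖ ^ (1 - κ) + ‖ε t‖ ^ (1 + κ) := by
      have := Real.rpow_pos_of_pos hpos (1 - κ)
      have := Real.rpow_pos_of_pos hpos (1 + κ)
      linarith
    nlinarith [mul_pos (mul_pos hp1 hp2) hp3]
  have h2 : ⟪ε t, δ t⟫ / ‖ε t‖ < ζ := by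
    have hb := hδbound t ht0
    have hcs : ⟪ε t, δ t⟫ ≤ ‖ε t‖ * ‖δ t‖ := real_inner_le_norm _ _
    rw [div_lt_iff₀ hpos]
    calc ⟪ε t, δ t⟫ ≤ ‖ε t‖ * ‖δ t‖ := hcs
    _ < ‖ε t‖ * ζ := by exact (mul_lt_mul_iff_right₀ hpos).2 hb
    _ = ζ * ‖ε t‖ := by ring
  linarith
end
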